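/- arXiv:2303.03690 — 6 statements merged into one kernel-verified Lean document; each statement's English description precedes it below -/
import Mathlib

section
/- Let 1 ≤ n ≤ N. The variable-step L1 kernels are strictly decreasing and positive: a^{(n)}_0 > a^{(n)}_1 > ⋯ > a^{(n)}_{n−1} > 0; that is, a^{(n)}_{j} > a^{(n)}_{j+1} for 0 ≤ j ≤ n−2 and a^{(n)}_{n−1} > 0. -/
open scoped BigOperators

/-- ω_β(t) = t^{β-1}/Γ(β) -/
noncomputable def omegaK (β t : ℝ) : ℝ := t ^ (β - 1) / Real.Gamma β

/-- variable-step L1 kernel: `aK α t n k = a^{(n)}_{n-k}` for `1 ≤ k ≤ n`. -/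
noncomputable def aK (α : ℝ) (t : ℕ → ℝ) (n k : ℕ) : ℝ :=
  (1 / (t k - t (k - 1))) * ∫ s in (t (k - 1))..(t k), omegaK (1 - α) (t n - s)

/-- DCC kernel: `pK α t n m = p^{(n)}_m`, i.e. `p^{(n)}_{n-k} = pK α t n (n-k)`;
`p^{(n)}_0 = 1/a^{(n)}_0` and
`p^{(n)}_{n-k} = (1/a^{(k)}_0) Σ_{j=k+1}^n (a^{(j)}_{j-k-1} - a^{(j)}_{j-k}) p^{(n)}_{n-j}`. -/
noncomputable def pK (α : ℝ) (t : ℕ → ℝ) (n : ℕ) : ℕ → ℝ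
  | 0 => 1 / aK α t n n
  | m + 1 =>
      (1 / aK α t (n - m - 1) (n - m - 1)) *
        ∑ i ∈ (Finset.range (m + 1)).attach,
          (aK α t (n - i.1) (n - m) - aK α t (n - i.1) (n - m - 1)) * pK α t n i.1
  decreasing_by exact Finset.mem_range.mp i.2

/-- explicit formula for the L1 kernels. -/
lemma aK_eq (α : ℝ) (t : ℕ → ℝ) (n k : ℕ) (hα : α < 1) :
    aK α t n k =
      ((t n - t (k - 1)) ^ (1 - α) - (t n - t k) ^ (1 - α)) /
        ((t k - t (k - 1)) * ((1 - α) * Real.Gamma (1 - α))) := by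
  unfold aK omegaK
  have h1 : ∀ s : ℝ, (t n - s) ^ (1 - α - 1) / Real.Gamma (1 - α)
      = (fun u : ℝ => u ^ (-α)) (t n - s) / Real.Gamma (1 - α) := by
    intro s; norm_num
  simp only [h1]
  rw [intervalIntegral.integral_div, intervalIntegral.integral_comp_sub_left
      (fun u : ℝ => u ^ (-α)) (t n)]
  rw [integral_rpow (Or.inl (by linarith))]
  have h2 : -α + 1 = 1 - α := by ring
  rw [h2]
  field_simp

lemma t_strict {N : ℕ} {t : ℕ → ℝ} (htmono : ∀ k, k < N → t k < t (k + 1)) :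
    ∀ {i j : ℕ}, i < j → j ≤ N → t i < t j := by
  intro i j hij hjN
  induction j with
  | zero => omega
  | succ m ih =>
    have hm : t m < t (m + 1) := htmono m (by omega)
    rcases Nat.lt_succ_iff_lt_or_eq.mp hij with h | rfl
    · exact (ih h (by omega)).trans hm
    · exact hm

/-- positivity and strict monotonicity of the variable-step L1 kernels:
for `1 ≤ n ≤ N`, `a^{(n)}_j > a^{(n)}_{j+1}` for `0 ≤ j ≤ n-2` and `a^{(n)}_{n-1} > 0`.
Here `a^{(n)}_j = aK α t n (n - j)`. -/
theorem L1_kernel_monotone_positive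
    (N : ℕ) (α : ℝ) (hα : 0 < α ∧ α < 1) (T : ℝ)
    (t : ℕ → ℝ) (ht0 : t 0 = 0) (htN : t N = T)
    (htmono : ∀ k, k < N → t k < t (k + 1))
    (n : ℕ) (hn1 : 1 ≤ n) (hnN : n ≤ N) :
    (∀ j, j + 2 ≤ n → aK α t n (n - (j + 1)) < aK α t n (n - j)) ∧
      0 < aK α t n 1 := by
  obtain ⟨hα0, hα1⟩ := hα
  have hc : 0 < 1 - α := by linarith
  have hΓ : 0 < Real.Gamma (1 - α) := Real.Gamma_pos_of_pos hc
  have hD : 0 < (1 - α) * Real.Gamma (1 - α) := mul_pos hc hΓ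
  have hlt : ∀ {i j : ℕ}, i < j → j ≤ N → t i < t j := fun h h' => t_strict htmono h h'
  constructor
  · intro j hj
    set k : ℕ := n - (j + 1) with hk
    have hk1 : 1 ≤ k := by omega
    have hkn : k + 1 ≤ n := by omega
    have hnj : n - j = k + 1 := by omega
    rw [hnj, aK_eq α t n k hα1, aK_eq α t n (k + 1) hα1]
    have hks : k + 1 - 1 = k := by omega
    rw [hks]
    set X : ℝ := t n - t (k - 1)
    set Y : ℝ := t n - t k
    set Z : ℝ := t n - t (k + 1)
    have hXY : Y < X := by
      have : t (k - 1) < t k := hlt (by omega) (by omega)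
      simp only [X, Y]; linarith
    have hYZ : Z < Y := by
      have : t k < t (k + 1) := hlt (by omega) (by omega)
      simp only [Y, Z]; linarith
    have hZ0 : 0 ≤ Z := by
      rcases eq_or_lt_of_le hkn with h | h
      · simp [Z, h]
      · have : t (k + 1) < t n := hlt (by omega) (by omega)
        simp only [Z]; linarith
    have hY0 : 0 ≤ Y := le_of_lt (lt_of_le_of_lt hZ0 hYZ)
    have hX0 : 0 ≤ X := le_of_lt (lt_of_le_of_lt hY0 hXY)
    have hslope := (Real.strictConcaveOn_rpow hc (by linarith)).slope_anti_adjacent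
      (x := Z) (y := Y) (z := X) (Set.mem_Ici.mpr hZ0) (Set.mem_Ici.mpr hX0) hYZ hXY
    have htk : t k - t (k - 1) = X - Y := by simp only [X, Y]; ring
    have htk1 : t (k + 1) - t k = Y - Z := by simp only [Y, Z]; ring
    rw [htk, htk1]
    have hXYpos : 0 < X - Y := by linarith
    have hYZpos : 0 < Y - Z := by linarith
    rw [div_lt_div_iff₀ (by positivity) (by positivity)]
    rw [div_lt_div_iff₀ hXYpos hYZpos] at hslope
    calc (X ^ (1 - α) - Y ^ (1 - α)) * ((Y - Z) * ((1 - α) * Real.Gamma (1 - α)))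
        = ((X ^ (1 - α) - Y ^ (1 - α)) * (Y - Z)) * ((1 - α) * Real.Gamma (1 - α)) := by ring
      _ < ((Y ^ (1 - α) - Z ^ (1 - α)) * (X - Y)) * ((1 - α) * Real.Gamma (1 - α)) := by
          exact mul_lt_mul_of_pos_right hslope hD
      _ = (Y ^ (1 - α) - Z ^ (1 - α)) * ((X - Y) * ((1 - α) * Real.Gamma (1 - α))) := by ring
  · rw [aK_eq α t n 1 hα1]
    have h10 : t 0 < t 1 := hlt (by omega) (by omega)
    have h1n : t 1 ≤ t n := by
      rcases eq_or_lt_of_le hn1 with h | h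
      · simp [← h]
      · exact le_of_lt (hlt h hnN)
    have hnum : (t n - t 1) ^ (1 - α) < (t n - t (1 - 1)) ^ (1 - α) := by
      have : (1 : ℕ) - 1 = 0 := rfl
      rw [this]
      exact Real.rpow_lt_rpow (by linarith) (by linarith) hc
    apply div_pos (by linarith)
    have : (1 : ℕ) - 1 = 0 := rfl
    rw [this]
    exact mul_pos (by linarith) hD
end

section
/- The discrete complementary convolution kernels are positive: p^{(n)}_{n−k} > 0 for all 1 ≤ k ≤ n ≤ N. -/
open scoped BigOperators

/-!
Integrating `ω_{1-α}` gives `ω_{2-α}`, so `a^{(j)}_{j-k}` is the secant slope of `ω_{2-α}` over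
`[t_j - t_k, t_j - t_{k-1}]`. As `ω_{2-α}(u) = u^{1-α}/Γ(2-α)` is strictly increasing and strictly
concave on `[0, ∞)`, these slopes are positive and strictly decrease as the interval moves away
from the origin: `a^{(j)}_{j-k-1} > a^{(j)}_{j-k}`. The DCC recursion therefore writes each
`p^{(n)}_{n-k}` as a positive combination of the kernels computed before it, and positivity
follows by strong induction.
-/

open Set

lemma integral_omegaK_sub {β : ℝ} (hβ : 0 < β) (a b c : ℝ) :
    ∫ s in a..b, omegaK β (c - s) = omegaK (β + 1) (c - a) - omegaK (β + 1) (c - b) := by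
  have hΓ : Real.Gamma β ≠ 0 := (Real.Gamma_pos_of_pos hβ).ne'
  simp only [omegaK, intervalIntegral.integral_comp_sub_left (fun u => u ^ (β - 1) / Real.Gamma β),
    intervalIntegral.integral_div, integral_rpow (Or.inl (by linarith : -1 < β - 1)),
    Real.Gamma_add_one hβ.ne', add_sub_cancel_right, sub_add_cancel]
  field_simp

lemma strictMonoOn_omegaK {β : ℝ} (hβ : 1 < β) : StrictMonoOn (omegaK β) (Ici 0) :=
  fun _ hx _ _ hxy => div_lt_div_of_pos_right (Real.rpow_lt_rpow hx hxy (by linarith))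
    (Real.Gamma_pos_of_pos (by linarith))

lemma strictConcaveOn_omegaK {β : ℝ} (hβ₁ : 1 < β) (hβ₂ : β < 2) :
    StrictConcaveOn ℝ (Ici 0) (omegaK β) := by
  refine ⟨convex_Ici 0, fun x hx y hy hxy a b ha hb hab => ?_⟩
  have hrpow := (Real.strictConcaveOn_rpow (p := β - 1) (by linarith) (by linarith)).2
    hx hy hxy ha hb hab
  simp only [smul_eq_mul, omegaK] at hrpow ⊢
  rw [← mul_div_assoc, ← mul_div_assoc, ← add_div]
  exact div_lt_div_of_pos_right hrpow (Real.Gamma_pos_of_pos (by linarith))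

section Kernels

variable {α : ℝ} {t : ℕ → ℝ} {N : ℕ}

lemma aK_eq_slope (hα : α < 1) (j k : ℕ) :
    aK α t j k = (omegaK (1 - α + 1) (t j - t (k - 1)) - omegaK (1 - α + 1) (t j - t k)) /
      ((t j - t (k - 1)) - (t j - t k)) := by
  rw [aK, integral_omegaK_sub (by linarith), sub_sub_sub_cancel_left, one_div_mul_eq_div]

lemma aK_pos (hα : α < 1) {j k : ℕ} (hk : t (k - 1) < t k) (hkj : t k ≤ t j) :
    0 < aK α t j k := by
  rw [aK_eq_slope hα]
  exact div_pos (sub_pos.2 (strictMonoOn_omegaK (by linarith) (mem_Ici.2 (by linarith))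
    (mem_Ici.2 (by linarith)) (by linarith))) (by linarith)

lemma aK_lt_aK_succ (hα₀ : 0 < α) (hα₁ : α < 1) {j k : ℕ} (hk : t (k - 1) < t k)
    (hk' : t k < t (k + 1)) (hkj : t (k + 1) ≤ t j) : aK α t j k < aK α t j (k + 1) := by
  rw [aK_eq_slope hα₁, aK_eq_slope hα₁, Nat.add_sub_cancel]
  exact (strictConcaveOn_omegaK (by linarith) (by linarith)).slope_anti_adjacent
    (mem_Ici.2 (by linarith)) (mem_Ici.2 (by linarith)) (by linarith) (by linarith)

lemma aK_diag_pos (hα : α < 1) (ht : StrictMonoOn t (Iic N)) {k : ℕ} (hk : 1 ≤ k)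
    (hkN : k ≤ N) : 0 < aK α t k k :=
  aK_pos hα (ht (mem_Iic.2 (by omega)) (mem_Iic.2 hkN) (by omega)) le_rfl

lemma pK_pos (hα₀ : 0 < α) (hα₁ : α < 1) (ht : StrictMonoOn t (Iic N)) {n : ℕ} (hnN : n ≤ N)
    {m : ℕ} (hmn : m < n) : 0 < pK α t n m := by
  induction m using Nat.strong_induction_on with
  | _ m ih =>
    cases m with
    | zero => rw [pK]; exact one_div_pos.2 (aK_diag_pos hα₁ ht (by omega) hnN)
    | succ m =>
      have hcoeff_pos : ∀ i ≤ m, 0 < aK α t (n - i) (n - m) - aK α t (n - i) (n - m - 1) := by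
        intro i hi
        have hsucc : n - m = n - m - 1 + 1 := by omega
        rw [sub_pos, hsucc]
        exact aK_lt_aK_succ hα₀ hα₁ (ht (mem_Iic.2 (by omega)) (mem_Iic.2 (by omega)) (by omega))
          (ht (mem_Iic.2 (by omega)) (mem_Iic.2 (by omega)) (by omega))
          (ht.monotoneOn (mem_Iic.2 (by omega)) (mem_Iic.2 (by omega)) (by omega))
      rw [pK]
      refine mul_pos (one_div_pos.2 (aK_diag_pos hα₁ ht (by omega) (by omega)))
        (Finset.sum_pos (fun i _ => ?_) (by simp))
      have hi := Finset.mem_range.1 i.2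
      exact mul_pos (hcoeff_pos i (by omega)) (ih i hi (by omega))

end Kernels

theorem DCC_kernel_positive_general
    (N : ℕ) (α : ℝ) (hα : 0 < α ∧ α < 1)
    (t : ℕ → ℝ)
    (htmono : ∀ k, k < N → t k < t (k + 1)) :
    ∀ n k, 1 ≤ k → k ≤ n → n ≤ N → 0 < pK α t n (n - k) := by
  intro n k hk hkn hnN
  exact pK_pos hα.1 hα.2 (strictMonoOn_Iic_of_lt_succ fun m hm => by simpa using htmono m hm)
    hnN (by omega)

/-- positivity of the DCC kernels: `p^{(n)}_{n-k} > 0` for all `1 ≤ k ≤ n ≤ N`. -/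
theorem DCC_kernel_positive
    (N : ℕ) (α : ℝ) (hα : 0 < α ∧ α < 1) (T : ℝ)
    (t : ℕ → ℝ) (ht0 : t 0 = 0) (htN : t N = T)
    (htmono : ∀ k, k < N → t k < t (k + 1)) :
    ∀ n k, 1 ≤ k → k ≤ n → n ≤ N → 0 < pK α t n (n - k) :=
  DCC_kernel_positive_general N α hα t htmono
end

section
/- The DCC kernels are complementary to the L1 kernels: for every 1 ≤ k ≤ n ≤ N, Σ_{j=k}^{n} p^{(n)}_{n−j} a^{(j)}_{j−k} = 1. -/
open scoped BigOperators

lemma aK_diag_pos_s2 (α : ℝ) (hα1 : α < 1) (t : ℕ → ℝ) (k : ℕ)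
    (hk : t (k-1) < t k) : 0 < aK α t k k := by
  unfold aK
  have hba : 0 < t k - t (k-1) := sub_pos.mpr hk
  have h1 : (∫ s in (t (k-1))..(t k), omegaK (1 - α) (t k - s))
      = ∫ x in (t k - t k)..(t k - t (k-1)), omegaK (1 - α) x :=
    intervalIntegral.integral_comp_sub_left _ (t k)
  have h2 : (∫ x in (t k - t k)..(t k - t (k-1)), omegaK (1 - α) x)
      = (∫ x in (0:ℝ)..(t k - t (k-1)), x ^ (-α)) / Real.Gamma (1-α) := by
    rw [sub_self]
    unfold omegaK
    rw [intervalIntegral.integral_div]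
    norm_num
  have h3 : (∫ x in (0:ℝ)..(t k - t (k-1)), x ^ (-α)) = (t k - t (k-1)) ^ (1-α) / (1-α) := by
    rw [integral_rpow (Or.inl (by linarith))]
    rw [Real.zero_rpow (by linarith)]
    ring_nf
  have hΓ : 0 < Real.Gamma (1-α) := Real.Gamma_pos_of_pos (by linarith)
  rw [h1, h2, h3]
  have hp : 0 < (t k - t (k-1)) ^ (1-α) := Real.rpow_pos_of_pos hba _
  have h1a : 0 < 1 - α := by linarith
  positivity

/-- complementarity of the DCC kernels with the L1 kernels:
`Σ_{j=k}^n p^{(n)}_{n-j} a^{(j)}_{j-k} = 1` for `1 ≤ k ≤ n ≤ N`.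
Here `p^{(n)}_{n-j} = pK α t n (n-j)` and `a^{(j)}_{j-k} = aK α t j k`. -/
theorem DCC_kernel_complementary
    (N : ℕ) (α : ℝ) (hα : 0 < α ∧ α < 1) (T : ℝ)
    (t : ℕ → ℝ) (ht0 : t 0 = 0) (htN : t N = T)
    (htmono : ∀ k, k < N → t k < t (k + 1)) :
    ∀ n k, 1 ≤ k → k ≤ n → n ≤ N →
      ∑ j ∈ Finset.Icc k n, pK α t n (n - j) * aK α t j k = 1 := by
  obtain ⟨hα0, hα1⟩ := hα
  have hdiag : ∀ j, 1 ≤ j → j ≤ N → aK α t j j ≠ 0 := by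
    intro j hj1 hjN
    refine ne_of_gt (aK_diag_pos_s2 α hα1 t j ?_)
    have := htmono (j-1) (by omega)
    rwa [Nat.sub_add_cancel hj1] at this
  intro n k hk1 hkn hnN
  suffices H : ∀ m k, 1 ≤ k → k + m = n →
      ∑ j ∈ Finset.Icc k n, pK α t n (n - j) * aK α t j k = 1 by
    exact H (n - k) k hk1 (by omega)
  intro m
  induction m with
  | zero =>
    intro k hk1 hkeq
    have hk : k = n := by omega
    subst hk
    rw [Finset.Icc_self, Finset.sum_singleton, Nat.sub_self]
    rw [pK]
    field_simp [hdiag k hk1 (by omega)]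
  | succ m ih =>
    intro k hk1 hkeq
    have hkn : k + 1 ≤ n := by omega
    have hsplit : Finset.Icc k n = insert k (Finset.Icc (k+1) n) := by
      ext x; simp [Finset.mem_Icc]; omega
    rw [hsplit, Finset.sum_insert (by simp)]
    have hnk : n - k = (n - k - 1) + 1 := by omega
    rw [hnk, pK]
    rw [show n - (n - k - 1) - 1 = k from by omega, show n - (n - k - 1) = k + 1 from by omega]
    have hA : aK α t k k ≠ 0 := hdiag k hk1 (by omega)
    rw [one_div, inv_mul_eq_div, div_mul_eq_mul_div, mul_div_assoc, div_self hA, mul_one]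
    rw [Finset.sum_attach (Finset.range (n - k - 1 + 1))
      (fun i => (aK α t (n - i) (k + 1) - aK α t (n - i) k) * pK α t n i)]
    have hre : ∑ i ∈ Finset.range (n - k - 1 + 1),
        (aK α t (n - i) (k + 1) - aK α t (n - i) k) * pK α t n i
        = ∑ j ∈ Finset.Icc (k+1) n, (aK α t j (k + 1) - aK α t j k) * pK α t n (n - j) := by
      refine Finset.sum_bij' (fun i _ => n - i) (fun j _ => n - j) ?_ ?_ ?_ ?_ ?_
      · intro a ha; simp only [Finset.mem_range] at ha; simp [Finset.mem_Icc]; omega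
      · intro b hb; simp only [Finset.mem_Icc] at hb; simp [Finset.mem_range]; omega
      · intro a ha; simp only [Finset.mem_range] at ha; show n - (n - a) = a; omega
      · intro b hb; simp only [Finset.mem_Icc] at hb; show n - (n - b) = b; omega
      · intro a ha; simp only [Finset.mem_range] at ha
        rw [show n - (n - a) = a from by omega]
    rw [hre, ← Finset.sum_add_distrib]
    have : ∀ j ∈ Finset.Icc (k+1) n,
        (aK α t j (k + 1) - aK α t j k) * pK α t n (n - j) + pK α t n (n - j) * aK α t j k
        = pK α t n (n - j) * aK α t j (k + 1) := by
      intro j _; ring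
    rw [Finset.sum_congr rfl this]
    exact ih (k+1) (by omega) (by omega)
end

section
/- Under the hypotheses of the discrete energy dissipation law (g ≥ 0, ε > 0, maximum time step satisfying τ^α ≤ 3/(Γ(2−α)(4g² + 3ε)), and u⁰, …, u^N ∈ V_h solving the variable-step L1 scheme), the discrete energy is bounded by the initial energy: E[u^n] ≤ E[u⁰] for all 1 ≤ n ≤ N. -/
open scoped BigOperators

/-- discrete Laplacian on `L`-periodic grid functions (indices mod `M`) -/
noncomputable def dLap (M : ℕ) (h : ℝ) (v : ZMod M → ZMod M → ℝ) : ZMod M → ZMod M → ℝ :=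
  fun i j => (v (i + 1) j + v (i - 1) j + v i (j + 1) + v i (j - 1) - 4 * v i j) / h ^ 2

/-- discrete inner product ⟨v,w⟩ = h² Σ_{ij} v_{ij} w_{ij} -/
noncomputable def dInner (M : ℕ) [NeZero M] (h : ℝ) (v w : ZMod M → ZMod M → ℝ) : ℝ :=
  h ^ 2 * ∑ i : ZMod M, ∑ j : ZMod M, v i j * w i j

/-- discrete L² norm -/
noncomputable def dNorm (M : ℕ) [NeZero M] (h : ℝ) (v : ZMod M → ZMod M → ℝ) : ℝ :=
  Real.sqrt (dInner M h v v)

/-- the operator (1+Δ_h) -/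
noncomputable def opA (M : ℕ) (h : ℝ) (v : ZMod M → ZMod M → ℝ) : ZMod M → ZMod M → ℝ :=
  v + dLap M h v

/-- pointwise nonlinearity f(u) = u³ - g u² - ε u -/
noncomputable def fPt (g ε : ℝ) (M : ℕ) (v : ZMod M → ZMod M → ℝ) : ZMod M → ZMod M → ℝ :=
  fun i j => (v i j) ^ 3 - g * (v i j) ^ 2 - ε * v i j

/-- discrete energy E[v] = ½‖(1+Δ_h)v‖² + ¼‖v‖₄⁴ - (g/3)⟨v²,v⟩ - (ε/2)‖v‖² -/
noncomputable def dEnergy (M : ℕ) [NeZero M] (h g ε : ℝ) (v : ZMod M → ZMod M → ℝ) : ℝ :=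
  (1 / 2) * dInner M h (opA M h v) (opA M h v)
    + (1 / 4) * (h ^ 2 * ∑ i : ZMod M, ∑ j : ZMod M, |v i j| ^ 4)
    - (g / 3) * dInner M h (fun i j => (v i j) ^ 2) v
    - (ε / 2) * dInner M h v v

/-- chemical potential μ = (1+Δ_h)² v + f(v) -/
noncomputable def muSH (M : ℕ) (h g ε : ℝ) (v : ZMod M → ZMod M → ℝ) : ZMod M → ZMod M → ℝ :=
  opA M h (opA M h v) + fPt g ε M v

open Finset MeasureTheory

/-!
Test the scheme at step `m` with `∇u^m := u^m - u^{m-1}`. The convex-splitting bound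
`E[a] - E[b] ≤ ⟨μ(a), a - b⟩ + (4g² + 3ε)/6 ‖a - b‖²` (a pointwise sum of squares, plus
self-adjointness of `1 + Δ_h`) shows that the energy increments sum to at most
`-Σ_m Σ_{k ≤ m} a^{(m)}_{m-k} ⟨∇u^k, ∇u^m⟩ + (4g² + 3ε)/6 Σ_m ‖∇u^m‖²`.

The L1 kernel is positive definite in the sense
`Σ_m Σ_{k ≤ m} a^{(m)}_{m-k} x_k x_m ≥ ½ Σ_m a^{(m)}_0 x_m²`. The identity
`Γ(α) r^{-α} = ∫_0^∞ θ^{α-1} e^{-θ r} dθ` writes each `a^{(m)}_{m-k}` as an integral over `θ`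
of the separable kernel `e^{-θ t_m} q_k(θ)`, where `q_k(θ)` is the mean of `e^{θ s}` over the
`k`-th step. Since `q_m(θ) ≤ e^{θ t_m} ≤ q_{m+1}(θ)`, the ratio `e^{-θ t_m} / q_m(θ)` decreases
in `m`, and Abel summation gives positivity for every `θ`.

The step restriction says exactly that `½ a^{(m)}_0 = τ_m^{-α} / (2 Γ(2 - α))` dominates
`(4g² + 3ε)/6`, so the sum is nonpositive.
-/

lemma sum_Icc_sub_pred (f : ℕ → ℝ) (n : ℕ) :
    ∑ m ∈ Icc 1 n, (f m - f (m - 1)) = f n - f 0 := by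
  induction n with
  | zero => simp
  | succ n ih => rw [sum_Icc_succ_top (by omega), ih, Nat.add_sub_cancel]; ring

lemma le_sum_Icc_mul_sq_sub_sq {c w : ℕ → ℝ} (hw : w 0 = 0) {n : ℕ}
    (hc : ∀ m, 1 ≤ m → m < n → c (m + 1) ≤ c m) :
    c n * w n ^ 2 ≤ ∑ m ∈ Icc 1 n, c m * (w m ^ 2 - w (m - 1) ^ 2) := by
  induction n with
  | zero => simp [hw]
  | succ n ih =>
    rw [sum_Icc_succ_top (by omega), Nat.add_sub_cancel]
    rcases Nat.eq_zero_or_pos n with rfl | hn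
    · simp [hw]
    · have := ih fun m hm hmn => hc m hm (by omega)
      nlinarith [hc n hn (by omega), sq_nonneg (w n)]

lemma half_sum_le_sum_sum_of_separable {E Q : ℕ → ℝ} {n : ℕ}
    (hQ : ∀ m ∈ Icc 1 n, 0 < Q m) (hEQ : ∀ m, 1 ≤ m → m < n → E (m + 1) / Q (m + 1) ≤ E m / Q m)
    (hE : 0 ≤ E n) (x : ℕ → ℝ) :
    (1 / 2) * ∑ m ∈ Icc 1 n, E m * Q m * x m ^ 2
      ≤ ∑ m ∈ Icc 1 n, ∑ k ∈ Icc 1 m, E m * Q k * (x k * x m) := by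
  set w : ℕ → ℝ := fun m => ∑ k ∈ Icc 1 m, Q k * x k
  have hrow : ∀ m ∈ Icc 1 n,
      ∑ k ∈ Icc 1 m, E m * Q k * (x k * x m) - (1 / 2) * (E m * Q m * x m ^ 2)
        = (1 / 2) * (E m / Q m * (w m ^ 2 - w (m - 1) ^ 2)) := by
    intro m hm
    obtain ⟨l, rfl⟩ : ∃ l, m = l + 1 := ⟨m - 1, (Nat.sub_add_cancel (mem_Icc.1 hm).1).symm⟩
    have hw : w (l + 1) = w l + Q (l + 1) * x (l + 1) := sum_Icc_succ_top (by omega) _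
    have hQm := (hQ _ hm).ne'
    have hsum : ∑ k ∈ Icc 1 (l + 1), E (l + 1) * Q k * (x k * x (l + 1))
        = E (l + 1) * x (l + 1) * w (l + 1) := by
      simp only [w, mul_sum]; exact sum_congr rfl fun k _ => by ring
    rw [hsum, hw, Nat.add_sub_cancel]
    field_simp
    ring
  have habel := le_sum_Icc_mul_sq_sub_sq (c := fun m => E m / Q m) (w := w) (by simp [w]) hEQ
  have hcn : 0 ≤ E n / Q n * w n ^ 2 := by
    rcases Nat.eq_zero_or_pos n with rfl | hn
    · simp [w]
    · exact mul_nonneg (div_nonneg hE (hQ n (mem_Icc.2 ⟨hn, le_rfl⟩)).le) (sq_nonneg _)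
  have hrows := sum_congr rfl hrow
  rw [sum_sub_distrib, ← mul_sum, ← mul_sum] at hrows
  linarith

lemma StrictMonoOn.apply_sub_one_lt {t : ℕ → ℝ} {n m : ℕ} (ht : StrictMonoOn t (Set.Iic n))
    (hm : 1 ≤ m) (hmn : m ≤ n) : t (m - 1) < t m :=
  ht (Set.mem_Iic.2 (by omega)) (Set.mem_Iic.2 hmn) (by omega)

noncomputable def meanExp (θ a b : ℝ) : ℝ := (Real.exp (θ * b) - Real.exp (θ * a)) / (θ * (b - a))

lemma exp_le_meanExp {θ a b : ℝ} (hθ : 0 < θ) (hab : a < b) :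
    Real.exp (θ * a) ≤ meanExp θ a b := by
  have hd : 0 < θ * (b - a) := mul_pos hθ (by linarith)
  have hb : Real.exp (θ * b) = Real.exp (θ * a) * Real.exp (θ * (b - a)) := by
    rw [← Real.exp_add]; ring_nf
  rw [meanExp, le_div_iff₀ hd]
  nlinarith [Real.add_one_le_exp (θ * (b - a)), Real.exp_pos (θ * a)]

lemma meanExp_le_exp {θ a b : ℝ} (hθ : 0 < θ) (hab : a < b) :
    meanExp θ a b ≤ Real.exp (θ * b) := by
  have hd : 0 < θ * (b - a) := mul_pos hθ (by linarith)
  have ha : Real.exp (θ * a) = Real.exp (θ * b) * Real.exp (θ * (a - b)) := by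
    rw [← Real.exp_add]; ring_nf
  rw [meanExp, div_le_iff₀ hd]
  nlinarith [Real.add_one_le_exp (θ * (a - b)), Real.exp_pos (θ * b)]

lemma half_sum_le_sum_sum_exp_mul_meanExp {t : ℕ → ℝ} {n : ℕ} (ht : StrictMonoOn t (Set.Iic n))
    {c θ : ℝ} (hc : 0 ≤ c) (hθ : 0 < θ) (x : ℕ → ℝ) :
    (1 / 2) * ∑ m ∈ Icc 1 n,
        c * Real.exp (-(θ * t m)) * meanExp θ (t (m - 1)) (t m) * x m ^ 2
      ≤ ∑ m ∈ Icc 1 n, ∑ k ∈ Icc 1 m,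
        c * Real.exp (-(θ * t m)) * meanExp θ (t (k - 1)) (t k) * (x k * x m) := by
  have hQ : ∀ m, 1 ≤ m → m ≤ n → 0 < meanExp θ (t (m - 1)) (t m) := fun m hm hmn =>
    (Real.exp_pos _).trans_le (exp_le_meanExp hθ (ht.apply_sub_one_lt hm hmn))
  refine half_sum_le_sum_sum_of_separable (fun m hm => ?_) (fun m hm hmn => ?_) (by positivity) x
  · simp only [mem_Icc] at hm
    exact hQ m hm.1 hm.2
  · have hlt : t m < t (m + 1) := by simpa using ht.apply_sub_one_lt (by omega) hmn
    have hQ1 : 0 < meanExp θ (t m) (t (m + 1)) := by simpa using hQ (m + 1) (by omega) hmn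
    rw [Nat.add_sub_cancel, div_le_div_iff₀ hQ1 (hQ m hm hmn.le), mul_assoc, mul_assoc c]
    refine mul_le_mul_of_nonneg_left ?_ hc
    calc Real.exp (-(θ * t (m + 1))) * meanExp θ (t (m - 1)) (t m)
        ≤ Real.exp (-(θ * t m)) * Real.exp (θ * t m) :=
          mul_le_mul (Real.exp_le_exp.2 (by nlinarith))
            (meanExp_le_exp hθ (ht.apply_sub_one_lt hm hmn.le)) (hQ m hm hmn.le).le (by positivity)
      _ ≤ Real.exp (-(θ * t m)) * meanExp θ (t m) (t (m + 1)) := by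
          gcongr
          exact exp_le_meanExp hθ hlt

lemma integrableOn_rpow_mul_exp_neg_mul {s r : ℝ} (hs : -1 < s) (hr : 0 < r) :
    IntegrableOn (fun θ : ℝ => θ ^ s * Real.exp (-(r * θ))) (Set.Ioi 0) := by
  simpa only [Real.rpow_one, neg_mul] using integrableOn_rpow_mul_exp_neg_mul_rpow hs one_pos hr

lemma integral_rpow_mul_exp_neg_sub_mul {α T s : ℝ} (hα : 0 < α) (hs : s < T) :
    ∫ θ in Set.Ioi 0, θ ^ (α - 1) * Real.exp (-((T - s) * θ)) = Real.Gamma α * (T - s) ^ (-α) := by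
  rw [Real.integral_rpow_mul_exp_neg_mul_Ioi hα (by linarith), one_div,
    Real.inv_rpow (by linarith), ← Real.rpow_neg (by linarith), mul_comm]

lemma integrable_rpow_mul_exp_neg_sub_mul_prod {α a b T : ℝ} (hα : 0 < α) (hα1 : α < 1)
    (hab : a ≤ b) (hbT : b ≤ T) :
    Integrable (Function.uncurry fun s θ : ℝ => θ ^ (α - 1) * Real.exp (-((T - s) * θ)))
      ((volume.restrict (Set.Ioo a b)).prod (volume.restrict (Set.Ioi 0))) := by
  have hmeas : Measurable
      (Function.uncurry fun s θ : ℝ => θ ^ (α - 1) * Real.exp (-((T - s) * θ))) := by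
    fun_prop
  refine (integrable_prod_iff hmeas.aestronglyMeasurable).2 ⟨?_, ?_⟩
  · filter_upwards [ae_restrict_mem measurableSet_Ioo] with s hs
    exact integrableOn_rpow_mul_exp_neg_mul (s := α - 1) (r := T - s) (by linarith)
      (by linarith [hs.2])
  · have hrpow : IntegrableOn (fun s => (T - s) ^ (-α)) (Set.Ioo a b) := by
      have := ((intervalIntegral.intervalIntegrable_rpow' (a := T - b) (b := T - a)
        (by linarith : -1 < -α)).comp_sub_left T).symm
      simp only [sub_sub_cancel] at this
      exact (intervalIntegrable_iff_integrableOn_Ioo_of_le hab).1 this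
    refine IntegrableOn.congr_fun (hrpow.const_mul (Real.Gamma α)) (fun s hs => ?_)
      measurableSet_Ioo
    simp only [Function.uncurry_apply_pair]
    rw [← integral_rpow_mul_exp_neg_sub_mul hα (hs.2.trans_le hbT)]
    refine setIntegral_congr_fun measurableSet_Ioi fun θ (hθ : 0 < θ) => ?_
    rw [Real.norm_of_nonneg (by positivity)]

lemma integral_exp_neg_sub_mul_Ioo {θ a b T : ℝ} (hθ : θ ≠ 0) (hab : a ≤ b) :
    ∫ s in Set.Ioo a b, Real.exp (-((T - s) * θ))
      = Real.exp (-(θ * T)) * ((Real.exp (θ * b) - Real.exp (θ * a)) / θ) := by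
  have hsplit : ∀ s, Real.exp (-((T - s) * θ)) = Real.exp (-(θ * T)) * Real.exp (θ * s) := by
    intro s; rw [← Real.exp_add]; ring_nf
  simp_rw [hsplit]
  rw [integral_const_mul, ← integral_Ioc_eq_integral_Ioo, ← intervalIntegral.integral_of_le hab,
    intervalIntegral.integral_comp_mul_left Real.exp hθ, integral_exp, smul_eq_mul, inv_mul_eq_div]

lemma gamma_mul_intervalIntegral_rpow_neg {α a b T : ℝ} (hα : 0 < α) (hα1 : α < 1)
    (hab : a ≤ b) (hbT : b ≤ T) :
    Real.Gamma α * ∫ s in a..b, (T - s) ^ (-α)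
      = ∫ θ in Set.Ioi 0, θ ^ (α - 1) * Real.exp (-(θ * T))
          * ((Real.exp (θ * b) - Real.exp (θ * a)) / θ) := by
  rw [intervalIntegral.integral_of_le hab, integral_Ioc_eq_integral_Ioo, ← integral_const_mul,
    ← setIntegral_congr_fun measurableSet_Ioo
      fun s hs => integral_rpow_mul_exp_neg_sub_mul hα (hs.2.trans_le hbT),
    integral_integral_swap (integrable_rpow_mul_exp_neg_sub_mul_prod hα hα1 hab hbT)]
  refine setIntegral_congr_fun measurableSet_Ioi fun θ (hθ : 0 < θ) => ?_
  rw [integral_const_mul, integral_exp_neg_sub_mul_Ioo hθ.ne' hab, mul_assoc]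

lemma integrableOn_rpow_mul_exp_neg_mul_exp_sub_exp {α a b T : ℝ} (hα : 0 < α) (hα1 : α < 1)
    (hab : a ≤ b) (hbT : b ≤ T) :
    IntegrableOn (fun θ => θ ^ (α - 1) * Real.exp (-(θ * T))
      * ((Real.exp (θ * b) - Real.exp (θ * a)) / θ)) (Set.Ioi 0) := by
  refine IntegrableOn.congr_fun
    (integrable_rpow_mul_exp_neg_sub_mul_prod hα hα1 hab hbT).integral_prod_right
    (fun θ (hθ : 0 < θ) => ?_) measurableSet_Ioi
  simp only [Function.uncurry_apply_pair]
  rw [integral_const_mul, integral_exp_neg_sub_mul_Ioo hθ.ne' hab, mul_assoc]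

lemma aK_eq_intervalIntegral_rpow (α : ℝ) (t : ℕ → ℝ) (n k : ℕ) :
    aK α t n k = (∫ s in t (k - 1)..t k, (t n - s) ^ (-α))
      / (Real.Gamma (1 - α) * (t k - t (k - 1))) := by
  simp only [aK, omegaK, sub_sub_cancel_left, intervalIntegral.integral_div]
  rw [← div_div, one_div_mul_eq_div, div_right_comm]

lemma aK_self {α : ℝ} (hα1 : α < 1) {t : ℕ → ℝ} {k : ℕ} (hk : t (k - 1) < t k) :
    aK α t k k = (t k - t (k - 1)) ^ (-α) / Real.Gamma (2 - α) := by
  have hτ : 0 < t k - t (k - 1) := by linarith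
  have hΓ : Real.Gamma (2 - α) = (1 - α) * Real.Gamma (1 - α) := by
    rw [show 2 - α = (1 - α) + 1 by ring, Real.Gamma_add_one (by linarith)]
  rw [aK_eq_intervalIntegral_rpow, intervalIntegral.integral_comp_sub_left (· ^ (-α)), sub_self,
    integral_rpow (Or.inl (by linarith)), Real.zero_rpow (by linarith), hΓ,
    show -α + 1 = 1 - α by ring, Real.rpow_sub hτ, Real.rpow_one, Real.rpow_neg hτ.le]
  have : Real.Gamma (1 - α) ≠ 0 := (Real.Gamma_pos_of_pos (by linarith)).ne'
  have : (1 : ℝ) - α ≠ 0 := by linarith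
  field_simp
  ring

lemma div_le_aK_self {α : ℝ} (hα1 : α < 1) {t : ℕ → ℝ} {k : ℕ} (hk : t (k - 1) < t k)
    {c d : ℝ} (hc : 0 < c) (hτ : (t k - t (k - 1)) ^ α ≤ d / (Real.Gamma (2 - α) * c)) :
    c / d ≤ aK α t k k := by
  have hτα : 0 < (t k - t (k - 1)) ^ α := Real.rpow_pos_of_pos (by linarith) α
  have hΓ : 0 < Real.Gamma (2 - α) := Real.Gamma_pos_of_pos (by linarith)
  have hd : (t k - t (k - 1)) ^ α * (Real.Gamma (2 - α) * c) ≤ d := by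
    rwa [le_div_iff₀ (by positivity)] at hτ
  have hdpos : 0 < d := lt_of_lt_of_le (by positivity) hd
  rw [aK_self hα1 hk, Real.rpow_neg (by linarith), ← one_div, div_div,
    div_le_div_iff₀ (by positivity) (by positivity)]
  linarith

noncomputable def aKLaplace (α : ℝ) (t : ℕ → ℝ) (n k : ℕ) (θ : ℝ) : ℝ :=
  (Real.Gamma α * Real.Gamma (1 - α))⁻¹ * θ ^ (α - 1) * Real.exp (-(θ * t n))
    * meanExp θ (t (k - 1)) (t k)

lemma aKLaplace_eq {α : ℝ} (t : ℕ → ℝ) (n k : ℕ) {θ : ℝ} (hθ : θ ≠ 0)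
    (hk : t k - t (k - 1) ≠ 0) :
    aKLaplace α t n k θ = (Real.Gamma α * Real.Gamma (1 - α) * (t k - t (k - 1)))⁻¹
      * (θ ^ (α - 1) * Real.exp (-(θ * t n))
        * ((Real.exp (θ * t k) - Real.exp (θ * t (k - 1))) / θ)) := by
  simp only [aKLaplace, meanExp]
  field_simp

lemma aK_eq_integral_aKLaplace {α : ℝ} (hα : 0 < α) (hα1 : α < 1) {t : ℕ → ℝ} {n k : ℕ}
    (hk : t (k - 1) < t k) (hkn : t k ≤ t n) :
    aK α t n k = ∫ θ in Set.Ioi 0, aKLaplace α t n k θ := by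
  have hΓ : Real.Gamma α ≠ 0 := (Real.Gamma_pos_of_pos hα).ne'
  have hτ : t k - t (k - 1) ≠ 0 := by linarith
  rw [setIntegral_congr_fun measurableSet_Ioi fun θ (hθ : 0 < θ) => aKLaplace_eq t n k hθ.ne' hτ,
    integral_const_mul, ← gamma_mul_intervalIntegral_rpow_neg hα hα1 hk.le hkn,
    aK_eq_intervalIntegral_rpow]
  field_simp

lemma integrableOn_aKLaplace {α : ℝ} (hα : 0 < α) (hα1 : α < 1) {t : ℕ → ℝ} {n k : ℕ}
    (hk : t (k - 1) < t k) (hkn : t k ≤ t n) :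
    IntegrableOn (aKLaplace α t n k) (Set.Ioi 0) :=
  IntegrableOn.congr_fun
    ((integrableOn_rpow_mul_exp_neg_mul_exp_sub_exp hα hα1 hk.le hkn).const_mul _)
    (fun θ (hθ : 0 < θ) => (aKLaplace_eq t n k hθ.ne' (by linarith)).symm) measurableSet_Ioi

lemma half_sum_integral_le_of_ae {X : Type*} [MeasurableSpace X] {μ : Measure X}
    {K : ℕ → ℕ → X → ℝ} {n : ℕ} (hK : ∀ m ∈ Icc 1 n, ∀ k ∈ Icc 1 m, Integrable (K m k) μ)
    (x : ℕ → ℝ)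
    (h : ∀ᵐ θ ∂μ, (1 / 2) * ∑ m ∈ Icc 1 n, K m m θ * x m ^ 2
      ≤ ∑ m ∈ Icc 1 n, ∑ k ∈ Icc 1 m, K m k θ * (x k * x m)) :
    (1 / 2) * ∑ m ∈ Icc 1 n, (∫ θ, K m m θ ∂μ) * x m ^ 2
      ≤ ∑ m ∈ Icc 1 n, ∑ k ∈ Icc 1 m, (∫ θ, K m k θ ∂μ) * (x k * x m) := by
  have hdiag : ∀ m ∈ Icc 1 n, Integrable (fun θ => K m m θ * x m ^ 2) μ := fun m hm =>
    (hK m hm m (by simp only [mem_Icc] at hm ⊢; omega)).mul_const _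
  have hrow : ∀ m ∈ Icc 1 n, ∀ k ∈ Icc 1 m,
      Integrable (fun θ => K m k θ * (x k * x m)) μ := fun m hm k hk =>
    (hK m hm k hk).mul_const _
  have hL : ∑ m ∈ Icc 1 n, (∫ θ, K m m θ ∂μ) * x m ^ 2
      = ∫ θ, ∑ m ∈ Icc 1 n, K m m θ * x m ^ 2 ∂μ := by
    simp_rw [← integral_mul_const]
    exact (integral_finsetSum _ hdiag).symm
  have hR : ∑ m ∈ Icc 1 n, ∑ k ∈ Icc 1 m, (∫ θ, K m k θ ∂μ) * (x k * x m)
      = ∫ θ, ∑ m ∈ Icc 1 n, ∑ k ∈ Icc 1 m, K m k θ * (x k * x m) ∂μ := by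
    simp_rw [← integral_mul_const]
    rw [integral_finsetSum _ fun m hm => integrable_finsetSum _ (hrow m hm)]
    exact sum_congr rfl fun m hm => (integral_finsetSum _ (hrow m hm)).symm
  rw [hL, hR, ← integral_const_mul]
  exact integral_mono_ae ((integrable_finsetSum _ hdiag).const_mul _)
    (integrable_finsetSum _ fun m hm => integrable_finsetSum _ (hrow m hm)) h

lemma half_sum_aK_mul_sq_le {α : ℝ} (hα : 0 < α) (hα1 : α < 1) {t : ℕ → ℝ} {n : ℕ}
    (ht : StrictMonoOn t (Set.Iic n)) (x : ℕ → ℝ) :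
    (1 / 2) * ∑ m ∈ Icc 1 n, aK α t m m * x m ^ 2
      ≤ ∑ m ∈ Icc 1 n, ∑ k ∈ Icc 1 m, aK α t m k * (x k * x m) := by
  have hmesh : ∀ m ∈ Icc 1 n, ∀ k ∈ Icc 1 m, t (k - 1) < t k ∧ t k ≤ t m := by
    intro m hm k hk
    simp only [mem_Icc] at hm hk
    exact ⟨ht.apply_sub_one_lt hk.1 (by omega),
      ht.monotoneOn (Set.mem_Iic.2 (by omega)) (Set.mem_Iic.2 (by omega)) hk.2⟩
  have hrep : ∀ m ∈ Icc 1 n, ∀ k ∈ Icc 1 m, aK α t m k = ∫ θ in Set.Ioi 0, aKLaplace α t m k θ :=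
    fun m hm k hk => aK_eq_integral_aKLaplace hα hα1 (hmesh m hm k hk).1 (hmesh m hm k hk).2
  rw [sum_congr rfl fun m hm => by rw [hrep m hm m (by simp only [mem_Icc] at hm ⊢; omega)],
    sum_congr rfl fun m hm => sum_congr rfl fun k hk => by rw [hrep m hm k hk]]
  refine half_sum_integral_le_of_ae (fun m hm k hk => integrableOn_aKLaplace hα hα1
    (hmesh m hm k hk).1 (hmesh m hm k hk).2) x ?_
  filter_upwards [ae_restrict_mem measurableSet_Ioi] with θ (hθ : 0 < θ)
  exact half_sum_le_sum_sum_exp_mul_meanExp ht (by positivity) hθ x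

lemma opA_sub {M : ℕ} (h : ℝ) (v w : ZMod M → ZMod M → ℝ) :
    opA M h (v - w) = opA M h v - opA M h w := by
  funext i j
  simp only [opA, dLap, Pi.add_apply, Pi.sub_apply]
  ring

section Grid

variable {M : ℕ} [NeZero M]

lemma sum_sum_shift_fst_mul (v w : ZMod M → ZMod M → ℝ) (a : ZMod M) :
    ∑ i, ∑ j, v (i + a) j * w i j = ∑ i, ∑ j, v i j * w (i - a) j :=
  Fintype.sum_equiv (Equiv.addRight a) _ _ fun i => by simp

lemma sum_sum_shift_snd_mul (v w : ZMod M → ZMod M → ℝ) (a : ZMod M) :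
    ∑ i, ∑ j, v i (j + a) * w i j = ∑ i, ∑ j, v i j * w i (j - a) :=
  Fintype.sum_congr _ _ fun i => Fintype.sum_equiv (Equiv.addRight a) _ _ fun j => by simp

lemma sum_sum_dLap_mul (h : ℝ) (v w : ZMod M → ZMod M → ℝ) :
    ∑ i, ∑ j, dLap M h v i j * w i j = ∑ i, ∑ j, v i j * dLap M h w i j := by
  have e₁ := sum_sum_shift_fst_mul v w 1
  have e₂ := sum_sum_shift_fst_mul v w (-1)
  have e₃ := sum_sum_shift_snd_mul v w 1
  have e₄ := sum_sum_shift_snd_mul v w (-1)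
  simp only [← sub_eq_add_neg, sub_neg_eq_add] at e₂ e₄
  simp only [dLap, div_mul_eq_mul_div, mul_div_assoc', ← sum_div, add_mul, sub_mul, mul_add,
    mul_sub, sum_add_distrib, sum_sub_distrib, e₁, e₂, e₃, e₄]
  simp only [mul_left_comm _ (4 : ℝ), mul_assoc]
  ring

lemma dInner_opA_left (h : ℝ) (v w : ZMod M → ZMod M → ℝ) :
    dInner M h (opA M h v) w = dInner M h v (opA M h w) := by
  simp only [dInner, opA, Pi.add_apply, add_mul, mul_add, sum_add_distrib, sum_sum_dLap_mul]

lemma dInner_add_left (h : ℝ) (u v w : ZMod M → ZMod M → ℝ) :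
    dInner M h (u + v) w = dInner M h u w + dInner M h v w := by
  simp only [dInner, Pi.add_apply, add_mul, sum_add_distrib, mul_add]

lemma dInner_neg_left (h : ℝ) (v w : ZMod M → ZMod M → ℝ) :
    dInner M h (-v) w = -dInner M h v w := by
  simp only [dInner, Pi.neg_apply, neg_mul, sum_neg_distrib, mul_neg]

lemma dInner_sum_smul_left (h : ℝ) (s : Finset ℕ) (c : ℕ → ℝ) (v : ℕ → ZMod M → ZMod M → ℝ)
    (w : ZMod M → ZMod M → ℝ) :
    dInner M h (∑ k ∈ s, c k • v k) w = ∑ k ∈ s, c k * dInner M h (v k) w := by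
  simp only [dInner, Finset.sum_apply, Pi.smul_apply, smul_eq_mul, sum_mul, mul_sum]
  refine (sum_congr rfl fun _ _ => sum_comm).trans (sum_comm.trans ?_)
  exact sum_congr rfl fun _ _ => sum_congr rfl fun _ _ => sum_congr rfl fun _ _ => by ring

lemma dInner_self_nonneg (h : ℝ) (v : ZMod M → ZMod M → ℝ) : 0 ≤ dInner M h v v :=
  mul_nonneg (sq_nonneg h) (sum_nonneg fun _ _ => sum_nonneg fun _ _ => mul_self_nonneg _)

lemma energy_density_sub_le (g ε x y p q : ℝ) :
    ((1 / 2) * p ^ 2 + (1 / 4) * x ^ 4 - (g / 3) * x ^ 3 - (ε / 2) * x ^ 2)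
      - ((1 / 2) * q ^ 2 + (1 / 4) * y ^ 4 - (g / 3) * y ^ 3 - (ε / 2) * y ^ 2)
      ≤ p * (p - q) + (x ^ 3 - g * x ^ 2 - ε * x) * (x - y)
        + ((4 * g ^ 2 + 3 * ε) / 6) * (x - y) ^ 2 := by
  -- the difference is `½ (p - q)² + (x - y)² (¼ (x - y - 2 (x - g/3))² + ½ (x - g/3)² + g²/2)`
  nlinarith [sq_nonneg (p - q), mul_nonneg (sq_nonneg (x - y)) (add_nonneg (add_nonneg
    (sq_nonneg ((x - y) - 2 * (x - g / 3))) (sq_nonneg (x - g / 3))) (sq_nonneg g))]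

lemma dEnergy_sub_le (h g ε : ℝ) (a b : ZMod M → ZMod M → ℝ) :
    dEnergy M h g ε a - dEnergy M h g ε b
      ≤ dInner M h (muSH M h g ε a) (a - b)
        + ((4 * g ^ 2 + 3 * ε) / 6) * dInner M h (a - b) (a - b) := by
  rw [muSH, dInner_add_left, dInner_opA_left, opA_sub]
  simp only [dEnergy, dInner, mul_sum, ← sum_add_distrib, ← sum_sub_distrib]
  gcongr with i _ j _
  have := mul_le_mul_of_nonneg_left (energy_density_sub_le g ε (a i j) (b i j)
    (opA M h a i j) (opA M h b i j)) (sq_nonneg h)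
  simp only [Pi.sub_apply, fPt, (show Even 4 by decide).pow_abs]
  linarith

lemma sum_sum_sum_comm (s : Finset ℕ) (F : ℕ → ZMod M → ZMod M → ℝ) :
    ∑ m ∈ s, ∑ i, ∑ j, F m i j = ∑ i, ∑ j, ∑ m ∈ s, F m i j :=
  sum_comm.trans (sum_congr rfl fun _ _ => sum_comm)

lemma sum_mul_dInner (h : ℝ) (s : Finset ℕ) (c : ℕ → ℝ) (v w : ℕ → ZMod M → ZMod M → ℝ) :
    ∑ m ∈ s, c m * dInner M h (v m) (w m)
      = h ^ 2 * ∑ i, ∑ j, ∑ m ∈ s, c m * (v m i j * w m i j) := by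
  simp only [dInner, mul_sum]
  rw [sum_sum_sum_comm]
  exact sum_congr rfl fun _ _ => sum_congr rfl fun _ _ => sum_congr rfl fun _ _ => by ring

lemma half_sum_mul_dInner_le {K : ℕ → ℕ → ℝ} {n : ℕ}
    (hK : ∀ x : ℕ → ℝ, (1 / 2) * ∑ m ∈ Icc 1 n, K m m * x m ^ 2
      ≤ ∑ m ∈ Icc 1 n, ∑ k ∈ Icc 1 m, K m k * (x k * x m))
    (h : ℝ) (v : ℕ → ZMod M → ZMod M → ℝ) :
    (1 / 2) * ∑ m ∈ Icc 1 n, K m m * dInner M h (v m) (v m)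
      ≤ ∑ m ∈ Icc 1 n, ∑ k ∈ Icc 1 m, K m k * dInner M h (v k) (v m) := by
  rw [sum_mul_dInner, sum_congr rfl fun m _ => sum_mul_dInner h _ (K m) v fun _ => v m,
    ← mul_sum, sum_sum_sum_comm, mul_left_comm]
  refine mul_le_mul_of_nonneg_left ?_ (sq_nonneg h)
  rw [mul_sum]
  gcongr with i
  rw [mul_sum]
  gcongr with j
  simpa only [sq] using hK fun m => v m i j

end Grid

theorem discrete_energy_bounded_by_initial_general
    (L : ℝ) (M : ℕ) [NeZero M]
    (g ε : ℝ) (hε : 0 < ε)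
    (N : ℕ) (α : ℝ) (hα : 0 < α ∧ α < 1)
    (t : ℕ → ℝ)
    (htmono : ∀ k, k < N → t k < t (k + 1))
    (hτ : ∀ k, 1 ≤ k → k ≤ N →
      (t k - t (k - 1)) ^ α ≤ 3 / (Real.Gamma (2 - α) * (4 * g ^ 2 + 3 * ε)))
    (u : ℕ → ZMod M → ZMod M → ℝ)
    (hscheme : ∀ n, 1 ≤ n → n ≤ N →
      (∑ k ∈ Finset.Icc 1 n, aK α t n k • (u k - u (k - 1)))
        = -(muSH M (L / M) g ε (u n))) :
    ∀ n, 1 ≤ n → n ≤ N →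
      dEnergy M (L / M) g ε (u n) ≤ dEnergy M (L / M) g ε (u 0) := by
  intro n hn hnN
  set h := L / M
  set v : ℕ → ZMod M → ZMod M → ℝ := fun m => u m - u (m - 1)
  have ht : StrictMonoOn t (Set.Iic n) :=
    strictMonoOn_Iic_of_lt_succ fun k hk => htmono k (by omega)
  have hstep : ∀ m ∈ Icc 1 n, dEnergy M h g ε (u m) - dEnergy M h g ε (u (m - 1))
      ≤ -∑ k ∈ Icc 1 m, aK α t m k * dInner M h (v k) (v m)
        + ((4 * g ^ 2 + 3 * ε) / 6) * dInner M h (v m) (v m) := by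
    intro m hm
    simp only [mem_Icc] at hm
    have := dEnergy_sub_le h g ε (u m) (u (m - 1))
    rwa [← neg_neg (muSH M h g ε (u m)), ← hscheme m hm.1 (by omega), dInner_neg_left,
      dInner_sum_smul_left] at this
  have hdiag : ∀ m ∈ Icc 1 n,
      ((4 * g ^ 2 + 3 * ε) / 6) * dInner M h (v m) (v m)
        ≤ (1 / 2) * (aK α t m m * dInner M h (v m) (v m)) := by
    intro m hm
    simp only [mem_Icc] at hm
    have hcd := div_le_aK_self hα.2 (ht.apply_sub_one_lt hm.1 hm.2) (by positivity)
      (hτ m hm.1 (by omega))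
    nlinarith [dInner_self_nonneg h (v m)]
  have hpsd := half_sum_mul_dInner_le (half_sum_aK_mul_sq_le hα.1 hα.2 ht) h v
  have hsum := sum_le_sum hstep
  rw [sum_Icc_sub_pred, sum_add_distrib, sum_neg_distrib] at hsum
  linarith [sum_le_sum hdiag, mul_sum (Icc 1 n) (fun m => aK α t m m * dInner M h (v m) (v m))
    (1 / 2)]

/-- under the step restriction `τ^α ≤ 3/(Γ(2-α)(4g²+3ε))`, solutions of the
variable-step L1 scheme satisfy `E[uⁿ] ≤ E[u⁰]` for all `1 ≤ n ≤ N`. -/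
theorem discrete_energy_bounded_by_initial
    (L : ℝ) (hL : 0 < L) (M : ℕ) [NeZero M] (hM : 2 ≤ M)
    (g ε : ℝ) (hg : 0 ≤ g) (hε : 0 < ε)
    (N : ℕ) (α T : ℝ) (hα : 0 < α ∧ α < 1)
    (t : ℕ → ℝ) (ht0 : t 0 = 0) (htN : t N = T)
    (htmono : ∀ k, k < N → t k < t (k + 1))
    (hτ : ∀ k, 1 ≤ k → k ≤ N →
      (t k - t (k - 1)) ^ α ≤ 3 / (Real.Gamma (2 - α) * (4 * g ^ 2 + 3 * ε)))
    (u : ℕ → ZMod M → ZMod M → ℝ)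
    (hscheme : ∀ n, 1 ≤ n → n ≤ N →
      (∑ k ∈ Finset.Icc 1 n, aK α t n k • (u k - u (k - 1)))
        = -(muSH M (L / M) g ε (u n))) :
    ∀ n, 1 ≤ n → n ≤ N →
      dEnergy M (L / M) g ε (u n) ≤ dEnergy M (L / M) g ε (u 0) :=
  discrete_energy_bounded_by_initial_general L M g ε hε N α hα t htmono hτ u hscheme
end

section
/- (Discrete embedding inequality.) There exists a constant C̃_Ω > 0 depending only on L (independent of the grid size) such that for every M ≥ 2 and every grid function v ∈ V_h, ‖v‖_∞ ≤ C̃_Ω ( ‖v‖ + ‖(1+Δ_h)v‖ ). -/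
/-!
The one-dimensional bound `u j ≤ mean u + ∑ |∂u|`, applied to `v²` along both axes of the
torus, bounds `v p²` by `‖v‖²/M² + ‖v‖ (‖∂₁v‖ + ‖∂₂v‖)/M + ‖v‖ ‖∂₁∂₂v‖ + ‖∂₁v‖ ‖∂₂v‖` up to a
factor 2 (discrete Leibniz rule and Cauchy–Schwarz; unweighted norms). Summation by parts gives
`‖∂₁v‖² + ‖∂₂v‖² ≤ ‖v‖ ‖Δv‖` and `‖∂₁∂₂v‖ ≤ ‖Δv‖`. In the weighted norms of the grid of width `h`
the right-hand side becomes a quadratic form in `‖v‖` and `‖Δ_h v‖` whose coefficients depend only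
on `hM = L`; finally `‖Δ_h v‖ ≤ ‖(1+Δ_h)v‖ + ‖v‖`.
-/

open scoped BigOperators

open Finset
open scoped fwdDiff

section L2Norm

variable {ι : Type*} [Fintype ι]

noncomputable def l2Norm (f : ι → ℝ) : ℝ := √(∑ p, f p ^ 2)

lemma l2Norm_nonneg (f : ι → ℝ) : 0 ≤ l2Norm f := Real.sqrt_nonneg _

lemma sq_l2Norm (f : ι → ℝ) : l2Norm f ^ 2 = ∑ p, f p ^ 2 :=
  Real.sq_sqrt (sum_nonneg fun _ _ => sq_nonneg _)

lemma l2Norm_eq_norm_toLp (f : ι → ℝ) :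
    l2Norm f = ‖(WithLp.toLp 2 f : EuclideanSpace ℝ ι)‖ := by
  simp [l2Norm, EuclideanSpace.norm_eq]

lemma l2Norm_add_le (f g : ι → ℝ) : l2Norm (f + g) ≤ l2Norm f + l2Norm g := by
  simpa only [l2Norm_eq_norm_toLp, WithLp.toLp_add] using norm_add_le _ _

lemma l2Norm_sub_le (f g : ι → ℝ) : l2Norm (f - g) ≤ l2Norm f + l2Norm g := by
  simpa only [l2Norm_eq_norm_toLp, WithLp.toLp_sub] using norm_sub_le _ _

lemma l2Norm_smul (c : ℝ) (f : ι → ℝ) : l2Norm (c • f) = |c| * l2Norm f := by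
  simp only [l2Norm_eq_norm_toLp, WithLp.toLp_smul, norm_smul, Real.norm_eq_abs]

lemma sum_abs_mul_le (f g : ι → ℝ) : ∑ p, |f p * g p| ≤ l2Norm f * l2Norm g := by
  simpa [abs_mul, l2Norm] using Real.sum_mul_le_sqrt_mul_sqrt univ (|f ·|) (|g ·|)

end L2Norm

section DifferenceOperators

variable {G : Type*} [AddCommGroup G]

def secondDiff (a : G) (f : G → ℝ) (p : G) : ℝ := f (p + a) + f (p - a) - 2 * f p

lemma fwdDiff_comm (a b : G) (f : G → ℝ) : Δ_[a] (Δ_[b] f) = Δ_[b] (Δ_[a] f) := by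
  ext p
  simp only [fwdDiff, add_right_comm p a b]
  ring

lemma fwdDiff_secondDiff_comm (a b : G) (f : G → ℝ) :
    Δ_[a] (secondDiff b f) = secondDiff b (Δ_[a] f) := by
  ext p
  simp only [fwdDiff, secondDiff, add_right_comm p a b, sub_add_eq_add_sub]
  ring

variable [Fintype G]

lemma l2Norm_comp_add_right (f : G → ℝ) (a : G) : l2Norm (fun p => f (p + a)) = l2Norm f := by
  rw [l2Norm, l2Norm,
    Fintype.sum_equiv (Equiv.addRight a) (fun p => f (p + a) ^ 2) (f · ^ 2) fun _ => rfl]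

lemma l2Norm_comp_add_add_le (f : G → ℝ) (a b : G) :
    l2Norm (fun p => f (p + a) + f (p + b)) ≤ 2 * l2Norm f := by
  calc _ ≤ l2Norm (fun p => f (p + a)) + l2Norm (fun p => f (p + b)) := l2Norm_add_le _ _
    _ = 2 * l2Norm f := by rw [l2Norm_comp_add_right, l2Norm_comp_add_right]; ring

lemma sum_fwdDiff_mul (a : G) (f g : G → ℝ) :
    ∑ p, Δ_[a] f p * g p = ∑ p, f p * (g (p - a) - g p) := by
  have shift : ∑ p, f (p + a) * g p = ∑ p, f p * g (p - a) := by
    simpa using (Equiv.sum_comp (Equiv.subRight a) (fun p => f (p + a) * g p)).symm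
  simp only [fwdDiff, sub_mul, mul_sub, sum_sub_distrib, shift]

lemma sum_sq_fwdDiff (a : G) (f : G → ℝ) :
    ∑ p, Δ_[a] f p ^ 2 = -∑ p, f p * secondDiff a f p := by
  simp only [sq, sum_fwdDiff_mul, ← sum_neg_distrib]
  refine sum_congr rfl fun p _ => ?_
  simp only [fwdDiff, secondDiff, sub_add_cancel]
  ring

lemma sum_secondDiff_mul_secondDiff (a b : G) (f : G → ℝ) :
    ∑ p, secondDiff a f p * secondDiff b f p = ∑ p, Δ_[a] (Δ_[b] f) p ^ 2 := by
  have hsd : ∀ p, Δ_[a] f (p - a) - Δ_[a] f p = -secondDiff a f p := fun p => by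
    simp only [fwdDiff, secondDiff, sub_add_cancel]; ring
  have h := sum_fwdDiff_mul a (secondDiff b f) (Δ_[a] f)
  simp only [fwdDiff_secondDiff_comm, hsd, mul_neg, sum_neg_distrib] at h
  rw [fwdDiff_comm, sum_sq_fwdDiff]
  simp only [mul_comm (Δ_[a] f _), h, neg_neg, mul_comm (secondDiff b f _)]

lemma sq_l2Norm_fwdDiff_add_sq_le (a b : G) (f : G → ℝ) :
    l2Norm (Δ_[a] f) ^ 2 + l2Norm (Δ_[b] f) ^ 2
      ≤ l2Norm f * l2Norm (secondDiff a f + secondDiff b f) := by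
  rw [sq_l2Norm, sq_l2Norm, sum_sq_fwdDiff, sum_sq_fwdDiff]
  calc _ = -∑ p, f p * (secondDiff a f + secondDiff b f) p := by
        simp only [Pi.add_apply, mul_add, sum_add_distrib]; ring
    _ ≤ ∑ p, |f p * (secondDiff a f + secondDiff b f) p| := by
        rw [← sum_neg_distrib]; exact sum_le_sum fun p _ => neg_le_abs _
    _ ≤ _ := sum_abs_mul_le _ _

lemma l2Norm_fwdDiff_fwdDiff_le (a b : G) (f : G → ℝ) :
    l2Norm (Δ_[a] (Δ_[b] f)) ≤ l2Norm (secondDiff a f + secondDiff b f) := by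
  refine Real.sqrt_le_sqrt ?_
  have expand : ∑ p, (secondDiff a f + secondDiff b f) p ^ 2 = ∑ p, secondDiff a f p ^ 2
      + 2 * ∑ p, secondDiff a f p * secondDiff b f p + ∑ p, secondDiff b f p ^ 2 := by
    simp only [Pi.add_apply, add_sq, sum_add_distrib, mul_sum, mul_assoc]
  rw [expand, sum_secondDiff_mul_secondDiff]
  have := sum_nonneg fun p (_ : p ∈ univ) => sq_nonneg (secondDiff a f p)
  have := sum_nonneg fun p (_ : p ∈ univ) => sq_nonneg (secondDiff b f p)
  have := sum_nonneg fun p (_ : p ∈ univ) => sq_nonneg (Δ_[a] (Δ_[b] f) p)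
  linarith

lemma sum_abs_fwdDiff_sq_le (a : G) (f : G → ℝ) :
    ∑ p, |Δ_[a] (f ^ 2) p| ≤ 2 * l2Norm f * l2Norm (Δ_[a] f) := by
  have leibniz : ∀ p, Δ_[a] (f ^ 2) p = (f (p + a) + f (p + 0)) * Δ_[a] f p := fun p => by
    simp only [fwdDiff, Pi.pow_apply, add_zero]; ring
  simp only [leibniz]
  exact (sum_abs_mul_le _ _).trans
    (mul_le_mul_of_nonneg_right (l2Norm_comp_add_add_le f a 0) (l2Norm_nonneg _))

lemma sum_abs_fwdDiff_fwdDiff_sq_le (a b : G) (f : G → ℝ) :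
    ∑ p, |Δ_[a] (Δ_[b] (f ^ 2)) p|
      ≤ 2 * l2Norm f * l2Norm (Δ_[a] (Δ_[b] f))
        + 2 * l2Norm (Δ_[a] f) * l2Norm (Δ_[b] f) := by
  have leibniz : ∀ p, Δ_[a] (Δ_[b] (f ^ 2)) p
      = (f (p + (a + b)) + f (p + a)) * Δ_[a] (Δ_[b] f) p
        + (Δ_[a] f (p + b) + Δ_[a] f (p + 0)) * Δ_[b] f p := fun p => by
    simp only [fwdDiff, Pi.pow_apply, add_zero, ← add_assoc, add_right_comm p b a]; ring
  calc ∑ p, |Δ_[a] (Δ_[b] (f ^ 2)) p|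
      ≤ ∑ p, |(f (p + (a + b)) + f (p + a)) * Δ_[a] (Δ_[b] f) p|
        + ∑ p, |(Δ_[a] f (p + b) + Δ_[a] f (p + 0)) * Δ_[b] f p| := by
        rw [← sum_add_distrib]; exact sum_le_sum fun p _ => leibniz p ▸ abs_add_le _ _
    _ ≤ _ := by
        gcongr
        · exact (sum_abs_mul_le _ _).trans (mul_le_mul_of_nonneg_right
            (l2Norm_comp_add_add_le f _ _) (l2Norm_nonneg _))
        · exact (sum_abs_mul_le _ _).trans (mul_le_mul_of_nonneg_right
            (l2Norm_comp_add_add_le _ _ _) (l2Norm_nonneg _))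

end DifferenceOperators

lemma abs_fwdDiff_sum_le {A B : Type*} [AddCommGroup A] [AddCommGroup B] [Fintype B]
    (Φ : A × B → ℝ) (a x : A) :
    |Δ_[a] (fun x => ∑ l, Φ (x, l)) x| ≤ ∑ l, |Δ_[(a, 0)] Φ (x, l)| := by
  simpa only [fwdDiff, Prod.mk_add_mk, add_zero, sum_sub_distrib] using
    abs_sum_le_sum_abs (fun l => Φ (x + a, l) - Φ (x, l)) univ

section Torus

variable {M : ℕ} [NeZero M]

lemma sum_range_natCast (g : ZMod M → ℝ) : ∑ s ∈ range M, g s = ∑ x, g x :=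
  sum_nbij' (fun s => (s : ZMod M)) ZMod.val (fun _ _ => mem_univ _)
    (fun x _ => mem_range.2 (ZMod.val_lt x)) (fun _ hs => ZMod.val_cast_of_lt (mem_range.1 hs))
    (fun x _ => ZMod.natCast_zmod_val x) (fun _ _ => rfl)

lemma sub_le_sum_abs_fwdDiff (u : ZMod M → ℝ) (j k : ZMod M) :
    u j - u k ≤ ∑ l, |Δ_[1] u l| := by
  have telescope : ∀ n : ℕ, u (k + n) - u k = ∑ s ∈ range n, Δ_[1] u (k + s) := fun n => by
    simpa [fwdDiff, add_assoc] using (sum_range_sub (fun s : ℕ => u (k + s)) n).symm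
  have hj : k + ((j - k).val : ZMod M) = j := by simp
  calc u j - u k = ∑ s ∈ range (j - k).val, Δ_[1] u (k + s) := by rw [← telescope, hj]
    _ ≤ ∑ s ∈ range (j - k).val, |Δ_[1] u (k + s)| := sum_le_sum fun _ _ => le_abs_self _
    _ ≤ ∑ s ∈ range M, |Δ_[1] u (k + s)| :=
        sum_le_sum_of_subset_of_nonneg (range_subset_range.2 (ZMod.val_lt _).le)
          fun _ _ _ => abs_nonneg _
    _ = ∑ l, |Δ_[1] u (k + l)| := sum_range_natCast fun l => |Δ_[1] u (k + l)|
    _ = ∑ l, |Δ_[1] u l| := Fintype.sum_equiv (Equiv.addLeft k) _ _ fun _ => rfl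

lemma le_mean_add_sum_abs_fwdDiff (u : ZMod M → ℝ) (j : ZMod M) :
    u j ≤ (∑ k, u k) / M + ∑ l, |Δ_[1] u l| := by
  have hM : (0 : ℝ) < M := Nat.cast_pos.2 (NeZero.pos M)
  have := sum_le_sum fun k (_ : k ∈ univ) => sub_le_sum_abs_fwdDiff u j k
  simp only [sum_sub_distrib, sum_const, card_univ, ZMod.card, nsmul_eq_mul] at this
  rw [div_add' _ _ _ hM.ne', le_div_iff₀ hM]
  linarith

lemma le_mean_add_sum_abs_fwdDiff_prod (F : ZMod M × ZMod M → ℝ) (p : ZMod M × ZMod M) :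
    F p ≤ (∑ q, F q) / M ^ 2 + (∑ q, |Δ_[(1, 0)] F q| + ∑ q, |Δ_[(0, 1)] F q|) / M
      + ∑ q, |Δ_[(1, 0)] (Δ_[(0, 1)] F) q| := by
  obtain ⟨i, j⟩ := p
  have hM : (0 : ℝ) ≤ M := Nat.cast_nonneg M
  have row : F (i, j) ≤ (∑ l, F (i, l)) / M + ∑ l, |Δ_[(0, 1)] F (i, l)| := by
    simpa [fwdDiff] using le_mean_add_sum_abs_fwdDiff (fun l => F (i, l)) j
  have rowSum : ∑ l, F (i, l) ≤ (∑ q, F q) / M + ∑ q, |Δ_[(1, 0)] F q| := by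
    refine (le_mean_add_sum_abs_fwdDiff (fun x => ∑ l, F (x, l)) i).trans ?_
    rw [Fintype.sum_prod_type, Fintype.sum_prod_type]
    gcongr with x
    exact abs_fwdDiff_sum_le F 1 x
  have rowVariation : ∑ l, |Δ_[(0, 1)] F (i, l)|
      ≤ (∑ q, |Δ_[(0, 1)] F q|) / M + ∑ q, |Δ_[(1, 0)] (Δ_[(0, 1)] F) q| := by
    refine (le_mean_add_sum_abs_fwdDiff (fun x => ∑ l, |Δ_[(0, 1)] F (x, l)|) i).trans ?_
    rw [Fintype.sum_prod_type, Fintype.sum_prod_type]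
    gcongr with x
    refine (abs_fwdDiff_sum_le (fun q => |Δ_[(0, 1)] F q|) 1 x).trans (sum_le_sum fun l _ => ?_)
    exact abs_abs_sub_abs_le_abs_sub _ _
  calc F (i, j) ≤ ((∑ q, F q) / M + ∑ q, |Δ_[(1, 0)] F q|) / M
        + ((∑ q, |Δ_[(0, 1)] F q|) / M + ∑ q, |Δ_[(1, 0)] (Δ_[(0, 1)] F) q|) := by
        grw [← rowSum, ← rowVariation]; exact row
    _ = _ := by ring

lemma sq_apply_le_l2Norm_fwdDiff (w : ZMod M × ZMod M → ℝ) (p : ZMod M × ZMod M) :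
    w p ^ 2 ≤ (l2Norm w / M) ^ 2
      + 2 * (l2Norm w / M) * (l2Norm (Δ_[(1, 0)] w) + l2Norm (Δ_[(0, 1)] w))
      + 2 * l2Norm w * l2Norm (Δ_[(1, 0)] (Δ_[(0, 1)] w))
      + 2 * l2Norm (Δ_[(1, 0)] w) * l2Norm (Δ_[(0, 1)] w) := by
  calc w p ^ 2 = (w ^ 2) p := rfl
    _ ≤ _ := le_mean_add_sum_abs_fwdDiff_prod (w ^ 2) p
    _ ≤ l2Norm w ^ 2 / M ^ 2
        + (2 * l2Norm w * l2Norm (Δ_[(1, 0)] w) + 2 * l2Norm w * l2Norm (Δ_[(0, 1)] w)) / M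
        + (2 * l2Norm w * l2Norm (Δ_[(1, 0)] (Δ_[(0, 1)] w))
          + 2 * l2Norm (Δ_[(1, 0)] w) * l2Norm (Δ_[(0, 1)] w)) := by
        rw [sq_l2Norm]
        simp only [Pi.pow_apply]
        gcongr
        · exact sum_abs_fwdDiff_sq_le _ _
        · exact sum_abs_fwdDiff_sq_le _ _
        · exact sum_abs_fwdDiff_fwdDiff_sq_le _ _ _
    _ = _ := by ring

lemma abs_apply_le_l2Norm_secondDiff (w : ZMod M × ZMod M → ℝ) {h : ℝ} (hh : 0 < h)
    (p : ZMod M × ZMod M) :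
    |w p| ≤ (1 / (h * M) + 1)
      * (h * l2Norm w + l2Norm (secondDiff (1, 0) w + secondDiff (0, 1) w) / h) := by
  have hM : (0 : ℝ) < M := Nat.cast_pos.2 (NeZero.pos M)
  set s := l2Norm w
  set ℓ := l2Norm (secondDiff (1, 0) w + secondDiff (0, 1) w)
  set d₁ := l2Norm (Δ_[(1, 0)] w)
  set d₂ := l2Norm (Δ_[(0, 1)] w)
  set c := 1 / (h * M)
  set N := h * s
  set Y := ℓ / h
  have hN : 0 ≤ N := mul_nonneg hh.le (l2Norm_nonneg w)
  have hY : 0 ≤ Y := div_nonneg (l2Norm_nonneg _) hh.le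
  have hc : 0 ≤ c := by positivity
  have hNY : N * Y = s * ℓ := by simp only [N, Y]; field_simp
  have hs : s / M = c * N := by simp only [c, N]; field_simp
  have energy : d₁ ^ 2 + d₂ ^ 2 ≤ N * Y := hNY ▸ sq_l2Norm_fwdDiff_add_sq_le _ _ w
  have mixed : 2 * s * l2Norm (Δ_[(1, 0)] (Δ_[(0, 1)] w)) ≤ 2 * (N * Y) := by
    rw [hNY, ← mul_assoc]
    exact mul_le_mul_of_nonneg_left (l2Norm_fwdDiff_fwdDiff_le _ _ w)
      (mul_nonneg zero_le_two (l2Norm_nonneg w))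
  have gradient : d₁ + d₂ ≤ N + Y :=
    le_of_sq_le_sq (by nlinarith [sq_nonneg (d₁ - d₂), sq_nonneg (N - Y)]) (add_nonneg hN hY)
  have key := sq_apply_le_l2Norm_fwdDiff w p
  rw [hs] at key
  refine abs_le_of_sq_le_sq ?_ (mul_nonneg (by positivity) (add_nonneg hN hY))
  have firstOrder : 2 * (c * N) * (d₁ + d₂) ≤ 2 * (c * N) * (N + Y) := by gcongr
  have gradientProduct : 2 * d₁ * d₂ ≤ N * Y := by nlinarith [sq_nonneg (d₁ - d₂)]
  have collect : (c * N) ^ 2 + 2 * (c * N) * (N + Y) + 3 * (N * Y) ≤ ((c + 1) * (N + Y)) ^ 2 := by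
    nlinarith [mul_nonneg hc hY, mul_nonneg hN hY, mul_nonneg (mul_nonneg hc hc) hY,
      sq_nonneg (N - Y)]
  linarith

end Torus

section PeriodicGrid

variable {M : ℕ}

lemma uncurry_dLap (h : ℝ) (v : ZMod M → ZMod M → ℝ) :
    Function.uncurry (dLap M h v) = (h ^ 2)⁻¹
      • (secondDiff (1, 0) (Function.uncurry v) + secondDiff (0, 1) (Function.uncurry v)) := by
  ext ⟨i, j⟩
  simp only [Function.uncurry, dLap, secondDiff, Pi.smul_apply, Pi.add_apply, Prod.mk_add_mk,
    Prod.mk_sub_mk, add_zero, sub_zero, smul_eq_mul]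
  ring

variable [NeZero M]

lemma dNorm_eq_abs_mul_l2Norm (h : ℝ) (v : ZMod M → ZMod M → ℝ) :
    dNorm M h v = |h| * l2Norm (Function.uncurry v) := by
  rw [dNorm, dInner, l2Norm, Fintype.sum_prod_type, Real.sqrt_mul (sq_nonneg h),
    Real.sqrt_sq_eq_abs]
  simp only [Function.uncurry, sq]

lemma dNorm_dLap_eq (h : ℝ) (v : ZMod M → ZMod M → ℝ) :
    dNorm M h (dLap M h v) = l2Norm
      (secondDiff (1, 0) (Function.uncurry v) + secondDiff (0, 1) (Function.uncurry v)) / |h| := by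
  rw [dNorm_eq_abs_mul_l2Norm, uncurry_dLap, l2Norm_smul, abs_inv, abs_pow]
  rcases eq_or_ne h 0 with rfl | hh
  · simp
  · field_simp

lemma dNorm_dLap_le (h : ℝ) (v : ZMod M → ZMod M → ℝ) :
    dNorm M h (dLap M h v) ≤ dNorm M h (opA M h v) + dNorm M h v := by
  have : dLap M h v = opA M h v - v := by simp [opA]
  simp only [this, dNorm_eq_abs_mul_l2Norm, ← mul_add]
  exact mul_le_mul_of_nonneg_left (l2Norm_sub_le _ _) (abs_nonneg h)

lemma abs_le_dNorm_add_dNorm_dLap {h : ℝ} (hh : 0 < h) (v : ZMod M → ZMod M → ℝ)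
    (i j : ZMod M) :
    |v i j| ≤ (1 / (h * M) + 1) * (dNorm M h v + dNorm M h (dLap M h v)) := by
  rw [dNorm_eq_abs_mul_l2Norm, dNorm_dLap_eq, abs_of_pos hh]
  exact abs_apply_le_l2Norm_secondDiff (Function.uncurry v) hh (i, j)

end PeriodicGrid

/-- discrete embedding inequality: there is a constant `C̃_Ω > 0` depending
only on `L` such that for every `M ≥ 2` and every periodic grid function `v`,
`‖v‖_∞ ≤ C̃_Ω (‖v‖ + ‖(1+Δ_h)v‖)` with `h = L/M`. -/
theorem discrete_embedding_inequality (L : ℝ) (hL : 0 < L) :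
    ∃ C > (0 : ℝ), ∀ (M : ℕ) [NeZero M], 2 ≤ M →
      ∀ v : ZMod M → ZMod M → ℝ, ∀ i j : ZMod M,
        |v i j| ≤ C * (dNorm M (L / M) v + dNorm M (L / M) (opA M (L / M) v)) := by
  refine ⟨2 * (1 / L + 1), by positivity, fun M _ _ v i j => ?_⟩
  have hM : (0 : ℝ) < M := Nat.cast_pos.2 (NeZero.pos M)
  have hh : 0 < L / M := div_pos hL hM
  have hhM : L / M * M = L := div_mul_cancel₀ L hM.ne'
  have hv := abs_le_dNorm_add_dNorm_dLap hh v i j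
  have hA : 0 ≤ dNorm M (L / M) (opA M (L / M) v) := Real.sqrt_nonneg _
  rw [hhM] at hv
  calc |v i j| ≤ (1 / L + 1) * (dNorm M (L / M) v + dNorm M (L / M) (dLap M (L / M) v)) := hv
    _ ≤ (1 / L + 1) * (dNorm M (L / M) v + (dNorm M (L / M) (opA M (L / M) v)
          + dNorm M (L / M) v)) := by grw [dNorm_dLap_le]
    _ ≤ _ := by nlinarith [mul_nonneg (by positivity : (0 : ℝ) ≤ 1 / L + 1) hA]
end

section
/- Let H be a real inner product space and let coefficients a_0 > a_1 > ⋯ > a_{n−1} > 0 be given (e.g., the variable-step L1 kernels a_j = a^{(n)}_j). Then for any vectors e⁰, e¹, …, e^n ∈ H, ⟨ Σ_{k=1}^{n} a_{n−k} (e^k − e^{k−1}), e^n ⟩ ≥ ‖e^n‖ · Σ_{k=1}^{n} a_{n−k} ( ‖e^k‖ − ‖e^{k−1}‖ ). -/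
/-!
Put `d k = ⟪e k, e n⟫ - ‖e k‖ * ‖e n‖`. The difference of the two sides is
`∑ a (n - k) * (d k - d (k - 1))`, and by Cauchy–Schwarz every `d k` is at most `d n = 0`.
A sum `∑ c k * (d k - d (k - 1))` whose weights `c k` are nonnegative and nondecreasing and
whose sequence `d` peaks at its last index is nonnegative (summation by parts); here the weights
`c k = a (n - k)` are nondecreasing because the kernels `a j` decrease.
-/

open scoped RealInnerProductSpace

open Finset

theorem sum_Icc_mul_sub_ge_of_le {c d : ℕ → ℝ} {M : ℝ} {n : ℕ} (hn : 1 ≤ n)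
    (hc₁ : 0 ≤ c 1) (hc : ∀ k ∈ Ico 1 n, c k ≤ c (k + 1)) (hd : ∀ k < n, d k ≤ M) :
    c n * (d n - M) ≤ ∑ k ∈ Icc 1 n, c k * (d k - d (k - 1)) := by
  induction n, hn using Nat.le_induction with
  | base => simpa using mul_le_mul_of_nonneg_left (by linarith [hd 0 one_pos]) hc₁
  | succ n hn ih =>
    have ih := ih (fun k hk => hc k (Ico_subset_Ico_right n.le_succ hk))
      (fun k hk => hd k (by omega))
    have hcn : c n ≤ c (n + 1) := hc n (mem_Ico.2 ⟨hn, n.lt_succ_self⟩)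
    have hdn : d n ≤ M := hd n n.lt_succ_self
    rw [sum_Icc_succ_top (by omega), Nat.add_sub_cancel]
    -- the new lower bound falls short of `ih` plus the new term by `(c (n + 1) - c n) * (M - d n) ≥ 0`
    nlinarith

theorem sum_Icc_mul_sub_nonneg {c d : ℕ → ℝ} {n : ℕ} (hc₁ : 0 ≤ c 1)
    (hc : ∀ k ∈ Ico 1 n, c k ≤ c (k + 1)) (hd : ∀ k < n, d k ≤ d n) :
    0 ≤ ∑ k ∈ Icc 1 n, c k * (d k - d (k - 1)) := by
  rcases n.eq_zero_or_pos with rfl | hn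
  · simp
  · simpa using sum_Icc_mul_sub_ge_of_le hn hc₁ hc hd

theorem inner_sum_smul_sub_sub_norm_mul_sum {H : Type*} [NormedAddCommGroup H]
    [InnerProductSpace ℝ H] (s : Finset ℕ) (c : ℕ → ℝ) (e : ℕ → H) (v : H) :
    ⟪∑ k ∈ s, c k • (e k - e (k - 1)), v⟫ - ‖v‖ * ∑ k ∈ s, c k * (‖e k‖ - ‖e (k - 1)‖) =
      ∑ k ∈ s, c k * ((⟪e k, v⟫ - ‖e k‖ * ‖v‖) - (⟪e (k - 1), v⟫ - ‖e (k - 1)‖ * ‖v‖)) := by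
  rw [sum_inner, mul_sum, ← sum_sub_distrib]
  refine sum_congr rfl fun k _ => ?_
  rw [real_inner_smul_left, inner_sub_left]
  ring

theorem L1_kernel_inner_product_lower_bound_general
    (H : Type*) [NormedAddCommGroup H] [InnerProductSpace ℝ H]
    (n : ℕ) (a : ℕ → ℝ)
    (ha_dec : ∀ j, j + 1 ≤ n - 1 → a (j + 1) < a j)
    (ha_pos : 0 < a (n - 1))
    (e : ℕ → H) :
    ⟪∑ k ∈ Finset.Icc 1 n, a (n - k) • (e k - e (k - 1)), e n⟫ ≥
      ‖e n‖ * ∑ k ∈ Finset.Icc 1 n, a (n - k) * (‖e k‖ - ‖e (k - 1)‖) := by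
  have hc : ∀ k ∈ Ico 1 n, a (n - k) ≤ a (n - (k + 1)) := by
    intro k hk
    obtain ⟨hk₁, hkn⟩ := mem_Ico.1 hk
    have h := ha_dec (n - (k + 1)) (by omega)
    rw [show n - (k + 1) + 1 = n - k by omega] at h
    exact h.le
  have hd : ∀ k < n, ⟪e k, e n⟫ - ‖e k‖ * ‖e n‖ ≤ ⟪e n, e n⟫ - ‖e n‖ * ‖e n‖ := by
    intro k _
    rw [real_inner_self_eq_norm_mul_norm, sub_self, sub_nonpos]
    exact real_inner_le_norm _ _
  have hsum := sum_Icc_mul_sub_nonneg (c := fun k => a (n - k)) (by simpa using ha_pos.le) hc hd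
  rw [← inner_sum_smul_sub_sub_norm_mul_sum] at hsum
  exact sub_nonneg.1 hsum

/-- for strictly decreasing positive coefficients `a_0 > a_1 > ⋯ > a_{n-1} > 0`
(e.g. the variable-step L1 kernels) and any vectors `e⁰,…,eⁿ` in a real inner product space,
`⟨Σ_{k=1}^n a_{n-k}(e^k - e^{k-1}), e^n⟩ ≥ ‖e^n‖ Σ_{k=1}^n a_{n-k}(‖e^k‖ - ‖e^{k-1}‖)`. -/
theorem L1_kernel_inner_product_lower_bound
    (H : Type*) [NormedAddCommGroup H] [InnerProductSpace ℝ H]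
    (n : ℕ) (hn : 1 ≤ n) (a : ℕ → ℝ)
    (ha_dec : ∀ j, j + 1 ≤ n - 1 → a (j + 1) < a j)
    (ha_pos : 0 < a (n - 1))
    (e : ℕ → H) :
    ⟪∑ k ∈ Finset.Icc 1 n, a (n - k) • (e k - e (k - 1)), e n⟫ ≥
      ‖e n‖ * ∑ k ∈ Finset.Icc 1 n, a (n - k) * (‖e k‖ - ‖e (k - 1)‖) :=
  L1_kernel_inner_product_lower_bound_general H n a ha_dec ha_pos e
end
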